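/- arXiv:1409.3483 — 11 statements merged into one kernel-verified Lean document; each statement's English description precedes it below -/
import Mathlib

section
/- Let M be a type and E an equivalence relation on Set M. Then the following are equivalent: (1) A[E] is naturally relatively categorical over M, i.e. for all ∂₁, ∂₂ : Set M → M realizing A[E] and every X ⊆ Set.range ∂₁, E(X, ∂₂ '' (∂₁ ⁻¹' X)) holds; (2) A[E] is injection invariant on abstracts over M, i.e. for every ∂ : Set M → M realizing A[E], every injective ι : M → M, and every X ⊆ Set.range ∂, E(X, ι '' X) holds; (3) A[E] is cardinality coarsening on abstracts over M, i.e. for every ∂ : Set M → M realizing A[E] and all X, Y : Set M with X ≈ Y and X ⊆ Set.range ∂, E(X, Y) holds. -/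
/-!
A realizer `d` of `A[E]` identifies `range d` with the quotient of `Set M` by `E`, so any two
realizers differ by a map that is injective on `range d₁`; it carries `X ⊆ range d₁` to an
equinumerous set, which gives (3) → (1), while (1) → (2) applies (1) to `d` and `ι ∘ d`.
For (2) → (3), an injection of `M` maps `X` onto an equinumerous `Y` as soon as `#Xᶜ ≤ #Yᶜ`.
Otherwise `#X = #M`, so `range d` is as large as `M` and can be reindexed into a surjective
realizer; relative to that realizer the same argument maps `Y` onto `X`.
-/

/-- `∂` realizes the abstraction principle `A[E]`. -/
def Realizes {M : Type*} (E : Set M → Set M → Prop) (d : Set M → M) : Prop :=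
  ∀ X Y : Set M, d X = d Y ↔ E X Y

open Cardinal Function Set

section Equinumerous

variable {M : Type*} {X Y : Set M}

lemma exists_injective_image_eq_of_mk_compl_le (hXY : #X = #Y) (hc : #↥Xᶜ ≤ #↥Yᶜ) :
    ∃ ι : M → M, Injective ι ∧ ι '' X = Y := by
  classical
  obtain ⟨e⟩ := Cardinal.eq.mp hXY
  obtain ⟨f⟩ := hc
  let ι := Equiv.Set.sumCompl Y ∘ Sum.map e f ∘ (Equiv.Set.sumCompl X).symm
  have hιX : ∀ x (hx : x ∈ X), ι x = e ⟨x, hx⟩ := fun x hx => by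
    simp [ι, Equiv.Set.sumCompl_symm_apply_of_mem hx]
  refine ⟨ι, (Equiv.injective _).comp ((Sum.map_injective.mpr ⟨e.injective, f.injective⟩).comp
    (Equiv.injective _)), ?_⟩
  ext y
  refine ⟨?_, fun hy => ⟨e.symm ⟨y, hy⟩, (e.symm ⟨y, hy⟩).2, by simp [hιX]⟩⟩
  rintro ⟨x, hx, rfl⟩
  exact hιX x hx ▸ (e ⟨x, hx⟩).2

lemma mk_eq_mk_of_mk_compl_lt (hXY : #X = #Y) (hc : #↥Yᶜ < #↥Xᶜ) : #X = #M := by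
  have hX : #X + #↥Xᶜ = #M := mk_sum_compl X
  have hY : #X + #↥Yᶜ = #M := hXY ▸ mk_sum_compl Y
  have hinf : ℵ₀ ≤ #X := by
    by_contra! hfin
    exact hc.ne (Cardinal.eq_of_add_eq_add_left (hY.trans hX.symm) hfin)
  have hle : #↥Xᶜ ≤ #X := by
    by_contra! hlt
    exact (hY ▸ add_lt_of_lt (hinf.trans hlt.le) hlt hc).not_ge (mk_set_le _)
  rw [← hX, add_eq_left hinf hle]

end Equinumerous

namespace Realizes

variable {M : Type*} {E : Set M → Set M → Prop} {d d₁ d₂ : Set M → M}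

lemma comp_injective (hd : Realizes E d) {ι : M → M} (hι : Injective ι) :
    Realizes E (ι ∘ d) := fun A B => hι.eq_iff.trans (hd A B)

lemma exists_surjective (hd : Realizes E d) (h : #(range d) = #M) :
    ∃ d' : Set M → M, Realizes E d' ∧ Surjective d' := by
  obtain ⟨e⟩ := Cardinal.eq.mp h
  refine ⟨e ∘ rangeFactorization d, fun A B => ?_, e.surjective.comp rangeFactorization_surjective⟩
  simp only [comp_apply, e.injective.eq_iff, rangeFactorization, Subtype.ext_iff, hd A B]

lemma exists_injOn_eq_comp (hd₁ : Realizes E d₁) (hd₂ : Realizes E d₂) :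
    ∃ g : M → M, InjOn g (range d₁) ∧ d₂ = g ∘ d₁ := by
  have hcongr : ∀ A B, d₁ A = d₁ B ↔ d₂ A = d₂ B := fun A B => (hd₁ A B).trans (hd₂ A B).symm
  refine ⟨d₂ ∘ invFun d₁, ?_, funext fun A => ?_⟩
  · rintro _ ⟨A, rfl⟩ _ ⟨B, rfl⟩ hAB
    rwa [comp_apply, comp_apply, ← hcongr, invFun_eq (f := d₁) ⟨A, rfl⟩,
      invFun_eq (f := d₁) ⟨B, rfl⟩] at hAB
  · exact (hcongr _ _).mp (invFun_eq ⟨A, rfl⟩).symm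

end Realizes

/-- Theorem 1.1/3.1: natural relative categoricity ↔ injection invariance on abstracts
↔ cardinality coarsening on abstracts. -/
theorem naturallyRelativelyCategorical_tfae {M : Type*} (E : Set M → Set M → Prop)
    (hE : Equivalence E) :
    List.TFAE
      [ -- (1) naturally relatively categorical
        (∀ d₁ d₂ : Set M → M, Realizes E d₁ → Realizes E d₂ →
          ∀ X : Set M, X ⊆ Set.range d₁ → E X (d₂ '' (d₁ ⁻¹' X))),
        -- (2) injection invariant on abstracts
        (∀ d : Set M → M, Realizes E d →
          ∀ ι : M → M, Function.Injective ι →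
            ∀ X : Set M, X ⊆ Set.range d → E X (ι '' X)),
        -- (3) cardinality coarsening on abstracts
        (∀ d : Set M → M, Realizes E d →
          ∀ X Y : Set M, Cardinal.mk X = Cardinal.mk Y → X ⊆ Set.range d → E X Y) ] := by
  tfae_have 1 → 2
  | h1, d, hd, ι, hι, X, hX => by
    have h := h1 d (ι ∘ d) hd (hd.comp_injective hι) X hX
    rwa [image_comp, image_preimage_eq_of_subset hX] at h
  tfae_have 2 → 3
  | h2, d, hd, X, Y, hXY, hX => by
    have of_le : ∀ d, Realizes E d → ∀ X Y : Set M, #X = #Y → #↥Xᶜ ≤ #↥Yᶜ →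
        X ⊆ range d → E X Y := by
      intro d hd X Y hXY hc hX
      obtain ⟨ι, hι, rfl⟩ := exists_injective_image_eq_of_mk_compl_le hXY hc
      exact h2 d hd ι hι X hX
    rcases le_or_gt #↥Xᶜ #↥Yᶜ with hc | hc
    · exact of_le d hd X Y hXY hc hX
    have hrange : #(range d) = #M :=
      (mk_set_le _).antisymm (mk_eq_mk_of_mk_compl_lt hXY hc ▸ mk_le_mk_of_subset hX)
    obtain ⟨d', hd', hsurj⟩ := hd.exists_surjective hrange
    exact hE.symm (of_le d' hd' Y X hXY.symm hc.le (hsurj.range_eq ▸ subset_univ Y))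
  tfae_have 3 → 1
  | h3, d₁, d₂, hd₁, hd₂, X, hX => by
    obtain ⟨g, hg, rfl⟩ := hd₁.exists_injOn_eq_comp hd₂
    rw [image_comp, image_preimage_eq_of_subset hX]
    exact h3 d₁ hd₁ X _ (mk_image_eq_of_injOn g X (hg.mono hX)).symm hX
  tfae_finish
end

section
/- Let M be a type and E an equivalence relation on Set M. Then the following are equivalent: (1) A[E] is surjectively relatively categorical over M, i.e. for all surjective ∂₁, ∂₂ : Set M → M realizing A[E] and every X : Set M, E(X, ∂₂ '' (∂₁ ⁻¹' X)) holds; (2) if there exists a surjective ∂ : Set M → M realizing A[E], then E is permutation invariant: for every bijection π : M ≃ M and every X : Set M, E(X, π '' X) holds; (3) if there exists a surjective ∂ : Set M → M realizing A[E], then E is bicardinality coarsening: for all X, Y : Set M with Cardinal.mk X = Cardinal.mk Y and Cardinal.mk ↥(Xᶜ) = Cardinal.mk ↥(Yᶜ), E(X, Y) holds. -/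
open Function Cardinal

namespace Realizes

variable {M : Type*} {E : Set M → Set M → Prop} {d d₁ d₂ : Set M → M}

theorem comp (hd : Realizes E d) {f : M → M} (hf : Injective f) : Realizes E (f ∘ d) :=
  fun X Y => hf.eq_iff.trans (hd X Y)

noncomputable def transferEquiv (h₁ : Realizes E d₁) (h₂ : Realizes E d₂)
    (hs₁ : Surjective d₁) (hs₂ : Surjective d₂) : M ≃ M :=
  (Setoid.quotientKerEquivOfSurjective d₁ hs₁).symm.trans <|
    (Quotient.congrRight fun X Y => (h₁ X Y).trans (h₂ X Y).symm).trans <|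
      Setoid.quotientKerEquivOfSurjective d₂ hs₂

theorem transferEquiv_apply (h₁ : Realizes E d₁) (h₂ : Realizes E d₂)
    (hs₁ : Surjective d₁) (hs₂ : Surjective d₂) (X : Set M) :
    transferEquiv h₁ h₂ hs₁ hs₂ (d₁ X) = d₂ X := by
  have : (Setoid.quotientKerEquivOfSurjective d₁ hs₁).symm (d₁ X) = ⟦X⟧ :=
    (Equiv.symm_apply_eq _).2 rfl
  simp only [transferEquiv, Equiv.trans_apply, this]
  rfl

theorem image_transferEquiv (h₁ : Realizes E d₁) (h₂ : Realizes E d₂)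
    (hs₁ : Surjective d₁) (hs₂ : Surjective d₂) (X : Set M) :
    transferEquiv h₁ h₂ hs₁ hs₂ '' X = d₂ '' (d₁ ⁻¹' X) := by
  have : transferEquiv h₁ h₂ hs₁ hs₂ ∘ d₁ = d₂ := funext (transferEquiv_apply h₁ h₂ hs₁ hs₂)
  calc transferEquiv h₁ h₂ hs₁ hs₂ '' X
      = transferEquiv h₁ h₂ hs₁ hs₂ '' (d₁ '' (d₁ ⁻¹' X)) := by rw [Set.image_preimage_eq X hs₁]
    _ = d₂ '' (d₁ ⁻¹' X) := by rw [← Set.image_comp, this]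

end Realizes

theorem Equiv.Perm.exists_image_eq_of_mk_eq {M : Type*} {X Y : Set M} (h : #X = #Y)
    (hc : #↥Xᶜ = #↥Yᶜ) : ∃ π : Equiv.Perm M, π '' X = Y := by
  classical
  obtain ⟨e⟩ := Cardinal.eq.mp h
  obtain ⟨f⟩ := Cardinal.eq.mp hc
  let π : Equiv.Perm M := Equiv.subtypeCongr e f
  have hmem : ∀ x, π x ∈ Y ↔ x ∈ X := by
    intro x
    by_cases hx : x ∈ X
    · have : π x = e ⟨x, hx⟩ := by
        simp [π, Equiv.subtypeCongr, Equiv.sumCompl_symm_apply_of_pos, hx]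
      simp only [this, (e ⟨x, hx⟩).2, hx]
    · have : π x = f ⟨x, hx⟩ := by
        simp [π, Equiv.subtypeCongr, Equiv.sumCompl_symm_apply_of_neg, hx]
      simp only [this, hx, iff_false]
      exact (f ⟨x, hx⟩).2
  refine ⟨π, ?_⟩
  rw [show X = π ⁻¹' Y from Set.ext fun x => (hmem x).symm]
  exact Set.image_preimage_eq Y π.surjective

theorem surjectivelyRelativelyCategorical_tfae_general {M : Type*} (E : Set M → Set M → Prop) :
    List.TFAE
      [ -- (1) surjectively relatively categorical
        (∀ d₁ d₂ : Set M → M, Function.Surjective d₁ → Function.Surjective d₂ →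
          Realizes E d₁ → Realizes E d₂ →
          ∀ X : Set M, E X (d₂ '' (d₁ ⁻¹' X))),
        -- (2) permutation invariant, assuming a surjective realization exists
        ((∃ d : Set M → M, Function.Surjective d ∧ Realizes E d) →
          ∀ π : M ≃ M, ∀ X : Set M, E X (⇑π '' X)),
        -- (3) bicardinality coarsening, assuming a surjective realization exists
        ((∃ d : Set M → M, Function.Surjective d ∧ Realizes E d) →
          ∀ X Y : Set M, Cardinal.mk X = Cardinal.mk Y →
            Cardinal.mk ↥(Xᶜ) = Cardinal.mk ↥(Yᶜ) → E X Y) ] := by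
  tfae_have 1 → 2 := by
    rintro h1 ⟨d, hs, hd⟩ π X
    have := h1 d (π ∘ d) hs (π.surjective.comp hs) hd (hd.comp π.injective) X
    rwa [Set.image_comp, Set.image_preimage_eq X hs] at this
  tfae_have 2 → 3 := by
    intro h2 hex X Y h hc
    obtain ⟨π, rfl⟩ := Equiv.Perm.exists_image_eq_of_mk_eq h hc
    exact h2 hex π X
  tfae_have 3 → 1 := by
    intro h3 d₁ d₂ hs₁ hs₂ h₁ h₂ X
    set Φ := h₁.transferEquiv h₂ hs₁ hs₂
    rw [← h₁.image_transferEquiv h₂ hs₁ hs₂]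
    refine h3 ⟨d₁, hs₁, h₁⟩ X _ (mk_image_eq Φ.injective).symm ?_
    rw [← Set.image_compl_eq Φ.bijective]
    exact (mk_image_eq Φ.injective).symm
  tfae_finish

/-- Theorem 1.2/3.3: surjective relative categoricity ↔ permutation invariance
↔ bicardinality coarsening (under surjectivity of the abstraction operator). -/
theorem surjectivelyRelativelyCategorical_tfae {M : Type*} (E : Set M → Set M → Prop)
    (hE : Equivalence E) :
    List.TFAE
      [ -- (1) surjectively relatively categorical
        (∀ d₁ d₂ : Set M → M, Function.Surjective d₁ → Function.Surjective d₂ →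
          Realizes E d₁ → Realizes E d₂ →
          ∀ X : Set M, E X (d₂ '' (d₁ ⁻¹' X))),
        -- (2) permutation invariant, assuming a surjective realization exists
        ((∃ d : Set M → M, Function.Surjective d ∧ Realizes E d) →
          ∀ π : M ≃ M, ∀ X : Set M, E X (⇑π '' X)),
        -- (3) bicardinality coarsening, assuming a surjective realization exists
        ((∃ d : Set M → M, Function.Surjective d ∧ Realizes E d) →
          ∀ X Y : Set M, Cardinal.mk X = Cardinal.mk Y →
            Cardinal.mk ↥(Xᶜ) = Cardinal.mk ↥(Yᶜ) → E X Y) ] :=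
  surjectivelyRelativelyCategorical_tfae_general E
end

section
/- (Fine's categoricity theorem) Let M be a type and E an equivalence relation on Set M which is cardinality coarsening, i.e. E X Y holds whenever Cardinal.mk X = Cardinal.mk Y. Suppose ∂₁, ∂₂ : Set M → M both realize A[E] and Cardinal.mk ↥((Set.range ∂₁)ᶜ) = Cardinal.mk ↥((Set.range ∂₂)ᶜ). Then there exists a bijection Δ : M ≃ M such that Δ (∂₁ X) = ∂₂ (Δ '' X) for every X : Set M (i.e. the two expanded structures are isomorphic). -/
/-!
Both `range ∂₁` and `range ∂₂` are copies of the quotient `Set M / E`, matched by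
`∂₁ X ↦ ∂₂ X`; extending this matching by any bijection between the equinumerous complements
gives `Δ` with `Δ (∂₁ X) = ∂₂ X`. Since `Δ '' X` and `X` have the same cardinality, they are
`E`-related, so `∂₂ X = ∂₂ (Δ '' X)`.
-/

open Cardinal Set

namespace Setoid

variable {α β γ : Type*} {f : α → β} {g : α → γ}

noncomputable def rangeEquivOfKerEq (h : ker f = ker g) : range f ≃ range g :=
  (quotientKerEquivRange f).symm.trans
    ((Quotient.congrRight fun a b => by rw [h]).trans (quotientKerEquivRange g))

theorem rangeEquivOfKerEq_apply (h : ker f = ker g) (a : α) :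
    (rangeEquivOfKerEq h ⟨f a, mem_range_self a⟩ : γ) = g a := by
  have hsymm : (quotientKerEquivRange f).symm ⟨f a, mem_range_self a⟩ = ⟦a⟧ :=
    (Equiv.symm_apply_eq _).2 rfl
  simp only [rangeEquivOfKerEq, Equiv.trans_apply, hsymm]
  rfl

end Setoid

theorem Equiv.exists_extend_of_mk_compl_eq {α : Type*} {s t : Set α} (e : s ≃ t)
    (h : #↥sᶜ = #↥tᶜ) : ∃ Δ : α ≃ α, ∀ x : s, Δ x = e x := by
  classical
  obtain ⟨ec⟩ := Cardinal.eq.mp h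
  exact ⟨Equiv.subtypeCongr e ec, fun x => by simp [Equiv.subtypeCongr]⟩

section Realizes

variable {M : Type*} {E : Set M → Set M → Prop} {d d₁ d₂ : Set M → M}

theorem Realizes.ker_eq_ker (h1 : Realizes E d₁) (h2 : Realizes E d₂) :
    Setoid.ker d₁ = Setoid.ker d₂ :=
  Setoid.ext fun X Y => (h1 X Y).trans (h2 X Y).symm

theorem Realizes.apply_image_of_injective (hcc : ∀ X Y : Set M, #X = #Y → E X Y)
    (hd : Realizes E d) {f : M → M} (hf : Function.Injective f) (X : Set M) :
    d (f '' X) = d X :=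
  (hd _ _).2 (hcc _ _ (mk_image_eq hf))

end Realizes

theorem fine_categoricity_general {M : Type*} (E : Set M → Set M → Prop)
    (hcc : ∀ X Y : Set M, Cardinal.mk X = Cardinal.mk Y → E X Y)
    (d₁ d₂ : Set M → M) (h1 : Realizes E d₁) (h2 : Realizes E d₂)
    (hcompl : Cardinal.mk ↥((Set.range d₁)ᶜ) = Cardinal.mk ↥((Set.range d₂)ᶜ)) :
    ∃ Δ : M ≃ M, ∀ X : Set M, Δ (d₁ X) = d₂ (⇑Δ '' X) := by
  have hker := h1.ker_eq_ker h2
  obtain ⟨Δ, hΔ⟩ := (Setoid.rangeEquivOfKerEq hker).exists_extend_of_mk_compl_eq hcompl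
  refine ⟨Δ, fun X => ?_⟩
  rw [h2.apply_image_of_injective hcc Δ.injective]
  exact (hΔ ⟨d₁ X, mem_range_self X⟩).trans (Setoid.rangeEquivOfKerEq_apply hker X)

/-- Fine's categoricity theorem: if `E` is cardinality coarsening and the complements of the
ranges of two abstraction operators realizing `A[E]` are equinumerous, then the two expanded
structures are isomorphic. -/
theorem fine_categoricity {M : Type*} (E : Set M → Set M → Prop) (hE : Equivalence E)
    (hcc : ∀ X Y : Set M, Cardinal.mk X = Cardinal.mk Y → E X Y)
    (d₁ d₂ : Set M → M) (h1 : Realizes E d₁) (h2 : Realizes E d₂)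
    (hcompl : Cardinal.mk ↥((Set.range d₁)ᶜ) = Cardinal.mk ↥((Set.range d₂)ᶜ)) :
    ∃ Δ : M ≃ M, ∀ X : Set M, Δ (d₁ X) = d₂ (⇑Δ '' X) :=
  fine_categoricity_general E hcc d₁ d₂ h1 h2 hcompl
end

section
/- (Coarsening Dichotomy) Let M be an infinite type and E an equivalence relation on Set M that is cardinality coarsening on small concepts. Let sE be the setoid on Set M given by E and s≈ the setoid on Set M given by equinumerosity (X ≈ Y iff Cardinal.mk X = Cardinal.mk Y). Then either Cardinal.mk (Quotient sE) < Cardinal.mk M, or Cardinal.mk (Quotient sE) = Cardinal.mk (Quotient s≈) = Cardinal.mk M; in either case Cardinal.mk (Quotient sE) ≤ Cardinal.mk M. -/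
universe u

/-- The setoid on `Set M` associated to an equivalence relation `E`. -/
def setoidOfEquiv {M : Type u} (E : Set M → Set M → Prop) (hE : Equivalence E) :
    Setoid (Set M) := ⟨E, hE⟩

/-- The setoid on `Set M` given by equinumerosity. -/
def equinumSetoid (M : Type u) : Setoid (Set M) :=
  ⟨fun X Y => Cardinal.mk X = Cardinal.mk Y,
    ⟨fun _ => rfl, fun h => h.symm, fun h h' => h.trans h'⟩⟩

/-!
If there are at least `#M` classes of `E`, then every `X : Set M` has at most that many elements,
so the hypothesis makes all equinumerous sets `E`-related and the `E`-quotient becomes a quotient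
of the equinumerosity quotient. The latter has at most `#M` elements: a class is determined by a
cardinal `≤ #M`, and for infinite `M` there are at most `#M` such cardinals.
-/

open Cardinal Set

theorem Cardinal.mk_quotient_le_of_le {α : Type u} {s t : Setoid α} (h : s ≤ t) :
    #(Quotient t) ≤ #(Quotient s) :=
  mk_le_of_surjective (f := Setoid.map_of_le h) (Quotient.ind fun x => ⟨Quotient.mk s x, rfl⟩)

theorem Cardinal.mk_Iic_le_lift {c : Cardinal.{u}} (hc : ℵ₀ ≤ c) :
    #(Iic c) ≤ lift.{u + 1} c := by
  have hord : ∀ d : Iic c, d.1.ord ∈ Iio (c.ord + 1) :=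
    fun d => Order.lt_add_one_iff.mpr (ord_le_ord.mpr d.2)
  calc #(Iic c) ≤ #(Iio (c.ord + 1)) :=
        mk_le_of_injective (f := fun d => ⟨d.1.ord, hord d⟩)
          fun d e hde => Subtype.ext (ord_injective (congrArg Subtype.val hde))
    _ = lift.{u + 1} c := by
        rw [mk_Iio_ordinal, Ordinal.card_add_one, card_ord, add_one_eq hc]

theorem mk_quotient_equinumSetoid_le (M : Type u) [Infinite M] :
    #(Quotient (equinumSetoid M)) ≤ #M := by
  let card : Quotient (equinumSetoid M) → Iic #M :=
    Quotient.lift (fun X => ⟨#X, mk_set_le X⟩) fun _ _ h => Subtype.ext h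
  have hcard : Function.Injective card := by
    rintro ⟨X⟩ ⟨Y⟩ h
    exact Quotient.sound (congrArg Subtype.val h)
  rw [← lift_le.{u + 1}]
  calc lift.{u + 1} #(Quotient (equinumSetoid M)) ≤ #(Iic #M) :=
        (lift_mk_le_lift_mk_of_injective hcard).trans_eq (lift_id'.{u, u + 1} _)
    _ ≤ lift.{u + 1} #M := mk_Iic_le_lift (aleph0_le_mk M)

theorem equinumSetoid_le_of_mk_le_mk_quotient {M : Type u} (s : Setoid (Set M))
    (hsmall : ∀ X Y : Set M, #X = #Y → #X ≤ #(Quotient s) → s X Y)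
    (hM : #M ≤ #(Quotient s)) : equinumSetoid M ≤ s :=
  fun X Y hXY => hsmall X Y hXY ((mk_set_le X).trans hM)

/-- Coarsening Dichotomy: if `E` is cardinality coarsening on small concepts on an infinite
domain, then the number of `E`-classes is either `< |M|` or equal to the number of
equinumerosity classes and to `|M|`; in either case it is `≤ |M|`. -/
theorem coarsening_dichotomy {M : Type u} [Infinite M] (E : Set M → Set M → Prop)
    (hE : Equivalence E)
    (hsmall : ∀ X Y : Set M, Cardinal.mk X = Cardinal.mk Y →
      Cardinal.mk X ≤ Cardinal.mk (Quotient (setoidOfEquiv E hE)) → E X Y) :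
    ((Cardinal.mk (Quotient (setoidOfEquiv E hE)) < Cardinal.mk M) ∨
      (Cardinal.mk (Quotient (setoidOfEquiv E hE)) = Cardinal.mk (Quotient (equinumSetoid M)) ∧
        Cardinal.mk (Quotient (setoidOfEquiv E hE)) = Cardinal.mk M)) ∧
    Cardinal.mk (Quotient (setoidOfEquiv E hE)) ≤ Cardinal.mk M := by
  have hequinum := mk_quotient_equinumSetoid_le M
  rcases lt_or_ge #(Quotient (setoidOfEquiv E hE)) #M with hlt | hge
  · exact ⟨Or.inl hlt, hlt.le⟩
  · have hcoarse : #(Quotient (setoidOfEquiv E hE)) ≤ #(Quotient (equinumSetoid M)) :=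
      mk_quotient_le_of_le (equinumSetoid_le_of_mk_le_mk_quotient _ hsmall hge)
    have hM : #(Quotient (setoidOfEquiv E hE)) = #M := (hcoarse.trans hequinum).antisymm hge
    exact ⟨Or.inr ⟨hcoarse.antisymm (hequinum.trans hge), hM⟩, hM.le⟩
end

section
/- Let M be a type with Cardinal.mk M = Cardinal.aleph 1, and let E be an equivalence relation on Set M that is cardinality coarsening, i.e. E X Y holds whenever Cardinal.mk X = Cardinal.mk Y. Then for any ∂₁, ∂₂ : Set M → M realizing A[E] there exists a bijection Δ : M ≃ M such that Δ (∂₁ X) = ∂₂ (Δ '' X) for every X : Set M; hence any two standard models of A[E] of cardinality ℵ₁ are isomorphic, so A[E] is ω₁-bivalent. -/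
/-!
A realizer `∂` of a cardinality coarsening `E` is constant on each cardinality class, so its range
has at most as many points as there are cardinals `≤ ℵ₁`, i.e. countably many. Two realizers of
the same `E` identify the same sets, so `∂₁ X ↦ ∂₂ X` is a well-defined injection of the countable
range of `∂₁`; as both complements have size `ℵ₁` it extends to a permutation `Δ` of `M`. Finally
`∂₂ X = ∂₂ (Δ '' X)` because `Δ '' X` has the cardinality of `X`.
-/

universe u

open Cardinal Set

theorem Cardinal.countable_Iic_aleph_one : (Iic ℵ₁ : Set Cardinal.{u}).Countable := by
  rw [← Iio_insert, show Iio ℵ₁ = Iic ℵ₀ from Set.ext fun _ => lt_aleph_one_iff, ← range_ofENat]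
  exact (countable_range _).insert _

theorem Set.exists_embedding_range_apply {α β : Type*} {f g : α → β}
    (h : ∀ a b, f a = f b ↔ g a = g b) :
    ∃ φ : range f ↪ β, ∀ a, φ ⟨f a, mem_range_self a⟩ = g a := by
  have hφ : ∀ a, g (rangeSplitting f ⟨f a, mem_range_self a⟩) = g a := fun a =>
    (h _ _).1 (apply_rangeSplitting f _)
  refine ⟨⟨fun m => g (rangeSplitting f m), fun m m' hmm' => ?_⟩, hφ⟩
  simpa only [apply_rangeSplitting, SetCoe.ext_iff] using (h _ _).2 hmm'

def CardinalityCoarsening {M : Type*} (E : Set M → Set M → Prop) : Prop :=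
  ∀ X Y : Set M, #X = #Y → E X Y

namespace Realizes

variable {M : Type u} {E : Set M → Set M → Prop} {d : Set M → M}

theorem apply_eq_of_mk_eq (hd : Realizes E d) (hE : CardinalityCoarsening E) {X Y : Set M}
    (hXY : #X = #Y) : d X = d Y :=
  (hd X Y).2 (hE X Y hXY)

theorem apply_image_of_injective_s7 (hd : Realizes E d) (hE : CardinalityCoarsening E) {f : M → M}
    (hf : f.Injective) (X : Set M) : d (f '' X) = d X :=
  hd.apply_eq_of_mk_eq hE (mk_image_eq hf)

theorem range_countable (hd : Realizes E d) (hE : CardinalityCoarsening E) (hM : #M ≤ ℵ₁) :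
    (range d).Countable := by
  choose S hS using fun c : Iic #M => le_mk_iff_exists_set.1 c.2
  have : Countable (Iic #M) := (countable_Iic_aleph_one.mono (Iic_subset_Iic.2 hM)).to_subtype
  refine (countable_range fun c => d (S c)).mono ?_
  rintro _ ⟨X, rfl⟩
  exact ⟨⟨#X, mk_set_le X⟩, hd.apply_eq_of_mk_eq hE (hS _)⟩

end Realizes

theorem omega1_bivalent_of_cardinalityCoarsening_general {M : Type u}
    (hM : Cardinal.mk M = Cardinal.aleph 1)
    (E : Set M → Set M → Prop)
    (hcc : ∀ X Y : Set M, Cardinal.mk X = Cardinal.mk Y → E X Y)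
    (d₁ d₂ : Set M → M) (h1 : Realizes E d₁) (h2 : Realizes E d₂) :
    ∃ Δ : M ≃ M, ∀ X : Set M, Δ (d₁ X) = d₂ (⇑Δ '' X) := by
  obtain ⟨φ, hφ⟩ := exists_embedding_range_apply fun X Y => (h1 X Y).trans (h2 X Y).symm
  have hsmall : #(range d₁) < #M := by
    rw [hM, lt_aleph_one_iff, le_aleph0_iff_set_countable]
    exact h1.range_countable hcc hM.le
  obtain ⟨Δ, hΔ⟩ := extend_function_of_lt φ hsmall ⟨Equiv.refl M⟩
  refine ⟨Δ, fun X => ?_⟩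
  rw [hΔ ⟨d₁ X, mem_range_self X⟩, hφ, h2.apply_image_of_injective_s7 hcc Δ.injective]

/-- On a domain of cardinality `ℵ₁`, any two standard models of `A[E]` for a cardinality
coarsening `E` are isomorphic; hence `A[E]` is `ω₁`-bivalent. -/
theorem omega1_bivalent_of_cardinalityCoarsening {M : Type u}
    (hM : Cardinal.mk M = Cardinal.aleph 1)
    (E : Set M → Set M → Prop) (hE : Equivalence E)
    (hcc : ∀ X Y : Set M, Cardinal.mk X = Cardinal.mk Y → E X Y)
    (d₁ d₂ : Set M → M) (h1 : Realizes E d₁) (h2 : Realizes E d₂) :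
    ∃ Δ : M ≃ M, ∀ X : Set M, Δ (d₁ X) = d₂ (⇑Δ '' X) :=
  omega1_bivalent_of_cardinalityCoarsening_general hM E hcc d₁ d₂ h1 h2
end

section
/- (The Nuisance Principle implies the universe is finite) Let M be a type. If there exists a function ∂ : Set M → M such that for all X Y : Set M, ∂ X = ∂ Y ↔ (X ∆ Y).Finite (where ∆ is symmetric difference), then M is finite. -/
/-!
If `M` is infinite then `M × M ≃ M`, so `X ↦ X ×ˢ univ` transports to a map `Set M → Set M`
sending distinct sets to sets with infinite symmetric difference. Composed with `∂` this is an
injection `Set M → M`, contradicting Cantor's theorem.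
-/

open Set

theorem Set.symmDiff_prod_univ {α β : Type*} (s t : Set α) :
    symmDiff (s ×ˢ (univ : Set β)) (t ×ˢ univ) = symmDiff s t ×ˢ univ := by
  ext ⟨a, b⟩
  simp [mem_symmDiff]

theorem Set.infinite_symmDiff_prod_univ {α β : Type*} [Infinite β] {s t : Set α} (h : s ≠ t) :
    (symmDiff (s ×ˢ (univ : Set β)) (t ×ˢ univ)).Infinite := by
  rw [symmDiff_prod_univ]
  exact infinite_univ.prod_right (symmDiff_nonempty.mpr h)

theorem exists_map_infinite_symmDiff_of_ne (M : Type*) [Infinite M] :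
    ∃ f : Set M → Set M, ∀ X Y, X ≠ Y → (symmDiff (f X) (f Y)).Infinite := by
  obtain ⟨e⟩ : Nonempty (M × M ≃ M) :=
    Cardinal.eq.mp (Cardinal.mul_eq_self (Cardinal.aleph0_le_mk M))
  refine ⟨fun X ↦ e '' (X ×ˢ univ), fun X Y h ↦ ?_⟩
  rw [← image_symmDiff e.injective]
  exact (infinite_symmDiff_prod_univ h).image e.injective.injOn

/-- The Nuisance Principle implies the universe is finite: if there is an abstraction
operator realizing `A[E]` for `E X Y ↔ (X ∆ Y).Finite`, then `M` is finite. -/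
theorem nuisance_implies_finite {M : Type*}
    (h : ∃ d : Set M → M, ∀ X Y : Set M, d X = d Y ↔ (symmDiff X Y).Finite) :
    Finite M := by
  obtain ⟨d, hd⟩ := h
  by_contra hfin
  have : Infinite M := not_finite_iff_infinite.mp hfin
  obtain ⟨f, hf⟩ := exists_map_infinite_symmDiff_of_ne M
  refine Function.cantor_injective (d ∘ f) fun X Y hXY ↦ ?_
  by_contra hne
  exact hf X Y hne ((hd _ _).mp hXY)
end

section
/- (The Nuisance Principle is naturally relatively categorical) Let M be a type and E the relation on Set M given by E(X,Y) := (X ∆ Y).Finite. Then for all ∂₁, ∂₂ : Set M → M realizing A[E] and every X ⊆ Set.range ∂₁, the symmetric difference X ∆ (∂₂ '' (∂₁ ⁻¹' X)) is finite; i.e. E(X, Γ '' X) holds where Γ is the natural bijection. -/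
/-! The Nuisance Principle has only finite models. On an infinite `M`, pick `f : M → M` with
infinite fibres (via `M ≃ M × M`); then `f ⁻¹' S` and `f ⁻¹' T` differ by an infinite set whenever
`S ≠ T`, so `S ↦ ∂ (f ⁻¹' S)` would inject `Set M` into `M`, contradicting Cantor. On a finite `M`
every set is finite. -/

open scoped symmDiff

theorem exists_infinite_fibers (M : Type*) [Infinite M] :
    ∃ f : M → M, ∀ x, (f ⁻¹' {x}).Infinite := by
  obtain ⟨e⟩ : Nonempty (M ≃ M × M) := Cardinal.eq.1 <| by
    rw [Cardinal.mk_prod, Cardinal.lift_id, Cardinal.mul_eq_self (Cardinal.aleph0_le_mk M)]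
  refine ⟨Prod.fst ∘ e, fun x => ?_⟩
  exact Set.infinite_of_injective_forall_mem (f := fun y => e.symm (x, y))
    (fun y z h => by simpa using h) (fun y => by simp)

theorem finite_of_eq_imp_finite_symmDiff {M : Type*} (d : Set M → M)
    (hd : ∀ X Y : Set M, d X = d Y → (X ∆ Y).Finite) : Finite M := by
  by_contra hM
  have : Infinite M := not_finite_iff_infinite.1 hM
  obtain ⟨f, hf⟩ := exists_infinite_fibers M
  refine Function.cantor_injective (fun S => d (f ⁻¹' S)) fun S T hST => ?_
  by_contra hne
  obtain ⟨x, hx⟩ : (S ∆ T).Nonempty :=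
    Set.nonempty_iff_ne_empty.2 fun h => hne (symmDiff_eq_bot.1 h)
  refine hf x ((hd _ _ hST).subset ?_)
  rw [← Set.preimage_symmDiff]
  exact Set.preimage_mono (Set.singleton_subset_iff.2 hx)

theorem nuisance_naturallyRelativelyCategorical_general {M : Type*} (d₁ d₂ : Set M → M)
    (h1 : ∀ X Y : Set M, d₁ X = d₁ Y ↔ (symmDiff X Y).Finite)
    (X : Set M) :
    (symmDiff X (d₂ '' (d₁ ⁻¹' X))).Finite := by
  have : Finite M := finite_of_eq_imp_finite_symmDiff d₁ fun X Y => (h1 X Y).1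
  exact Set.toFinite _

/-- The Nuisance Principle is naturally relatively categorical: for any two abstraction
operators realizing it and any `X` contained in the range of the first, `X` differs from the
image of `X` under the natural bijection by a finite set. -/
theorem nuisance_naturallyRelativelyCategorical {M : Type*} (d₁ d₂ : Set M → M)
    (h1 : ∀ X Y : Set M, d₁ X = d₁ Y ↔ (symmDiff X Y).Finite)
    (h2 : ∀ X Y : Set M, d₂ X = d₂ Y ↔ (symmDiff X Y).Finite)
    (X : Set M) (hX : X ⊆ Set.range d₁) :
    (symmDiff X (d₂ '' (d₁ ⁻¹' X))).Finite :=
  nuisance_naturallyRelativelyCategorical_general d₁ d₂ h1 X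
end

section
/- (The Bicardinality Principle is surjectively relatively categorical) Let M be a type and E the relation on Set M given by E(X,Y) := Cardinal.mk X = Cardinal.mk Y ∧ Cardinal.mk ↥(Xᶜ) = Cardinal.mk ↥(Yᶜ). Then for all surjective ∂₁, ∂₂ : Set M → M realizing A[E] and every X : Set M, E(X, ∂₂ '' (∂₁ ⁻¹' X)) holds. -/
/-!
Two realizations of the same abstraction principle have the same kernel, namely `E`. If `∂₁` is
surjective, `∂₂` therefore factors as `g ∘ ∂₁` for a map `g : M → M`, which is injective because
the kernels agree and surjective because `∂₂` is. The image `∂₂ '' (∂₁ ⁻¹' X)` is then just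
`g '' X`, and a bijection of `M` preserves both the cardinality of a set and that of its complement.
-/

open Function Set

universe u

namespace Function.Surjective

variable {α β γ : Type*} {d₁ : α → β} {d₂ : α → γ}

noncomputable def naturalMap (hd₁ : Surjective d₁) (d₂ : α → γ) : β → γ :=
  d₂ ∘ surjInv hd₁

theorem naturalMap_comp (hd₁ : Surjective d₁)
    (hker : ∀ a b, d₁ a = d₁ b ↔ d₂ a = d₂ b) : hd₁.naturalMap d₂ ∘ d₁ = d₂ :=
  funext fun a => (hker _ _).mp (surjInv_eq hd₁ (d₁ a))

theorem naturalMap_injective (hd₁ : Surjective d₁)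
    (hker : ∀ a b, d₁ a = d₁ b ↔ d₂ a = d₂ b) : Injective (hd₁.naturalMap d₂) := by
  intro b b' h
  rw [← surjInv_eq hd₁ b, ← surjInv_eq hd₁ b']
  exact (hker _ _).mpr h

theorem naturalMap_bijective (hd₁ : Surjective d₁)
    (hker : ∀ a b, d₁ a = d₁ b ↔ d₂ a = d₂ b) (hd₂ : Surjective d₂) : Bijective (hd₁.naturalMap d₂) :=
  ⟨naturalMap_injective hd₁ hker, (naturalMap_comp hd₁ hker ▸ hd₂).of_comp⟩

theorem image_preimage_eq_naturalMap_image (hd₁ : Surjective d₁)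
    (hker : ∀ a b, d₁ a = d₁ b ↔ d₂ a = d₂ b) (X : Set β) :
    d₂ '' (d₁ ⁻¹' X) = hd₁.naturalMap d₂ '' X := by
  conv_lhs => rw [← naturalMap_comp hd₁ hker]
  rw [image_comp, image_preimage_eq X hd₁]

end Function.Surjective

theorem Function.Bijective.mk_image_eq_and_mk_compl_image_eq {β γ : Type u} {g : β → γ}
    (hg : Bijective g) (X : Set β) :
    Cardinal.mk X = Cardinal.mk ↥(g '' X) ∧ Cardinal.mk ↥(Xᶜ) = Cardinal.mk ↥((g '' X)ᶜ) := by
  rw [← image_compl_eq hg, Cardinal.mk_image_eq hg.injective, Cardinal.mk_image_eq hg.injective]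
  exact ⟨rfl, rfl⟩

/-- The Bicardinality Principle is surjectively relatively categorical: for any two
surjective abstraction operators realizing it and any `X`, the set `X` and its image under
the natural bijection are equinumerous with equinumerous complements. -/
theorem bicardinality_surjectivelyRelativelyCategorical {M : Type*} (d₁ d₂ : Set M → M)
    (hs1 : Function.Surjective d₁) (hs2 : Function.Surjective d₂)
    (h1 : ∀ X Y : Set M, d₁ X = d₁ Y ↔
      (Cardinal.mk X = Cardinal.mk Y ∧ Cardinal.mk ↥(Xᶜ) = Cardinal.mk ↥(Yᶜ)))
    (h2 : ∀ X Y : Set M, d₂ X = d₂ Y ↔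
      (Cardinal.mk X = Cardinal.mk Y ∧ Cardinal.mk ↥(Xᶜ) = Cardinal.mk ↥(Yᶜ)))
    (X : Set M) :
    Cardinal.mk X = Cardinal.mk ↥(d₂ '' (d₁ ⁻¹' X)) ∧
      Cardinal.mk ↥(Xᶜ) = Cardinal.mk ↥((d₂ '' (d₁ ⁻¹' X))ᶜ) := by
  have hker : ∀ X Y, d₁ X = d₁ Y ↔ d₂ X = d₂ Y := fun X Y => (h1 X Y).trans (h2 X Y).symm
  rw [hs1.image_preimage_eq_naturalMap_image hker]
  exact (hs1.naturalMap_bijective hker hs2).mk_image_eq_and_mk_compl_image_eq X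
end

section
/- Let n ≥ 1 and let M be a type with exactly 2n elements. Say Cmp(X) holds for X : Set M if there exists Y : Set M with Cardinal.mk X = Cardinal.mk Y, X ∩ Y = ∅ and X ∪ Y = Set.univ. Define E(X,Y) := (Cmp X ∨ Cmp Y) → (X = Y ∨ (Cardinal.mk X = Cardinal.mk Y ∧ X ∩ Y = ∅ ∧ X ∪ Y = Set.univ)). Then E is an equivalence relation on Set M, and the quotient of Set M by E has exactly (Nat.choose (2*n) n) / 2 + 1 elements. -/
/-!
`Cmp X` just says `#X = #Xᶜ`, so on a type with `2n` elements it says `|X| = n`. Fix a point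
`a`. Then `Ecmp X Y` holds exactly when `X` and `Y` have the same image under the map sending
a non-`Cmp` set to `none` and a `Cmp` set `X` to the member of `{X, Xᶜ}` containing `a`. Hence
`Ecmp` is an equivalence whose classes are `none` and the `n`-sets containing `a`. Since
complementation swaps these with the `n`-sets avoiding `a`, there are `(2n).choose n / 2` of them.
-/

/-- `X` is a complement: there is a set equinumerous with `X`, disjoint from `X`, whose
union with `X` is the universe. -/
def Cmp {M : Type*} (X : Set M) : Prop :=
  ∃ Y : Set M, Cardinal.mk X = Cardinal.mk Y ∧ X ∩ Y = ∅ ∧ X ∪ Y = Set.univ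

/-- The complementation relation. -/
def Ecmp {M : Type*} (X Y : Set M) : Prop :=
  (Cmp X ∨ Cmp Y) →
    (X = Y ∨ (Cardinal.mk X = Cardinal.mk Y ∧ X ∩ Y = ∅ ∧ X ∪ Y = Set.univ))

open Set

section Complementation

variable {M : Type*}

lemma inter_eq_empty_and_union_eq_univ_iff_eq_compl {X Y : Set M} :
    X ∩ Y = ∅ ∧ X ∪ Y = univ ↔ Y = Xᶜ := by
  rw [eq_compl_iff_isCompl, isCompl_comm, isCompl_iff, disjoint_iff_inter_eq_empty,
    codisjoint_iff]
  rfl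

lemma cmp_iff_mk_eq_mk_compl {X : Set M} : Cmp X ↔ Cardinal.mk X = Cardinal.mk ↥Xᶜ := by
  simp only [Cmp, inter_eq_empty_and_union_eq_univ_iff_eq_compl, exists_eq_right]

lemma Cmp.compl {X : Set M} (h : Cmp X) : Cmp Xᶜ := by
  rw [cmp_iff_mk_eq_mk_compl, compl_compl] at *
  exact h.symm

lemma ecmp_iff {X Y : Set M} : Ecmp X Y ↔ (Cmp X ∨ Cmp Y → X = Y ∨ Cmp X ∧ Y = Xᶜ) := by
  simp only [Ecmp, inter_eq_empty_and_union_eq_univ_iff_eq_compl, cmp_iff_mk_eq_mk_compl]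
  constructor <;> rintro h hc <;> rcases h hc with h | ⟨h, rfl⟩ <;> simp_all

open Classical in
/-- The pair `{X, Xᶜ}` of a `Cmp` set is encoded by its member containing `a`. -/
noncomputable def ecmpClass (a : M) (X : Set M) : Option (Set M) :=
  if Cmp X then some (if a ∈ X then X else Xᶜ) else none

lemma ecmpClass_of_not_cmp (a : M) {X : Set M} (h : ¬Cmp X) : ecmpClass a X = none := by
  simp only [ecmpClass, if_neg h]

lemma ecmpClass_of_cmp_of_mem {a : M} {X : Set M} (h : Cmp X) (ha : a ∈ X) :
    ecmpClass a X = some X := by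
  simp only [ecmpClass, if_pos h, if_pos ha]

lemma ecmpClass_eq_ecmpClass_iff (a : M) {X Y : Set M} (hX : Cmp X) (hY : Cmp Y) :
    ecmpClass a X = ecmpClass a Y ↔ X = Y ∨ Y = Xᶜ := by
  simp only [ecmpClass, if_pos hX, if_pos hY, Option.some_inj]
  grind [compl_inj_iff, compl_compl]

lemma ecmp_iff_ecmpClass_eq (a : M) {X Y : Set M} :
    Ecmp X Y ↔ ecmpClass a X = ecmpClass a Y := by
  rw [ecmp_iff]
  by_cases hX : Cmp X <;> by_cases hY : Cmp Y
  · rw [ecmpClass_eq_ecmpClass_iff a hX hY]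
    simp [hX]
  · rw [ecmpClass_of_not_cmp a hY]
    simp only [ecmpClass, if_pos hX, reduceCtorEq, iff_false]
    intro h
    rcases h (Or.inl hX) with rfl | ⟨-, rfl⟩
    exacts [hY hX, hY hX.compl]
  · rw [ecmpClass_of_not_cmp a hX]
    simp only [ecmpClass, if_pos hY, reduceCtorEq, iff_false]
    intro h
    rcases h (Or.inr hY) with rfl | ⟨hX', -⟩
    exacts [hX hY, hX hX']
  · simp only [ecmpClass_of_not_cmp a hX, ecmpClass_of_not_cmp a hY, iff_true]
    rintro (h | h) <;> contradiction

theorem ecmp_equivalence : Equivalence (@Ecmp M) := by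
  cases isEmpty_or_nonempty M with
  | inl _ =>
    have hall (X Y : Set M) : Ecmp X Y := fun _ => Or.inl (Subsingleton.elim X Y)
    exact ⟨fun X => hall X X, fun _ => hall _ _, fun _ _ => hall _ _⟩
  | inr h =>
    obtain ⟨a⟩ := h
    have hker : @Ecmp M = Function.onFun (· = ·) (ecmpClass a) := by
      ext X Y
      exact ecmp_iff_ecmpClass_eq a
    exact hker ▸ eq_equivalence.comap (ecmpClass a)

lemma not_cmp_empty [Nonempty M] : ¬Cmp (∅ : Set M) := by
  simp [cmp_iff_mk_eq_mk_compl, eq_comm]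

lemma range_ecmpClass (a : M) :
    range (ecmpClass a) = insert none (some '' {X | Cmp X ∧ a ∈ X}) := by
  ext (_ | Y)
  · simpa using ⟨∅, ecmpClass_of_not_cmp a (have : Nonempty M := ⟨a⟩; not_cmp_empty)⟩
  · simp only [mem_range, mem_insert_iff, reduceCtorEq, mem_image, Option.some_inj, false_or]
    constructor
    · rintro ⟨X, hX⟩
      unfold ecmpClass at hX
      split_ifs at hX with hc ha <;> simp only [Option.some_inj] at hX <;> subst hX
      exacts [⟨X, ⟨hc, ha⟩, rfl⟩, ⟨Xᶜ, ⟨hc.compl, ha⟩, rfl⟩]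
    · rintro ⟨X, ⟨hX, ha⟩, rfl⟩
      exact ⟨X, ecmpClass_of_cmp_of_mem hX ha⟩

lemma natCard_range_ecmpClass [Finite M] (a : M) :
    Nat.card (range (ecmpClass a)) = {X | Cmp X ∧ a ∈ X}.ncard + 1 := by
  rw [Nat.card_coe_set_eq, range_ecmpClass, ncard_insert_of_notMem (by simp),
    ncard_image_of_injective _ (Option.some_injective _)]

lemma cmp_iff_ncard_eq [Finite M] {n : ℕ} (hM : Nat.card M = 2 * n) {X : Set M} :
    Cmp X ↔ X.ncard = n := by
  have hsum := ncard_add_ncard_compl X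
  rw [cmp_iff_mk_eq_mk_compl, ← cast_ncard (toFinite X), ← cast_ncard (toFinite Xᶜ),
    Nat.cast_inj]
  omega

lemma ncard_setOf_ncard_eq [Finite M] (k : ℕ) :
    {X : Set M | X.ncard = k}.ncard = (Nat.card M).choose k := by
  have := Fintype.ofFinite M
  rw [← Set.powersetCard.card, ← Nat.card_coe_set_eq]
  exact Nat.card_congr (Fintype.finsetEquivSet.subtypeEquiv fun s => by simp).symm

lemma two_mul_ncard_setOf_ncard_eq_and_mem [Finite M] {n : ℕ} (hM : Nat.card M = 2 * n)
    (a : M) :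
    2 * {X : Set M | X.ncard = n ∧ a ∈ X}.ncard = (2 * n).choose n := by
  set S := {X : Set M | X.ncard = n}
  have hcompl : S \ {X | a ∈ X} = compl '' (S ∩ {X | a ∈ X}) := by
    ext X
    have := ncard_add_ncard_compl X
    simp only [← preimage_compl_eq_image_compl, mem_preimage, mem_sdiff, mem_inter_iff,
      mem_ofPred_eq, mem_compl_iff, S]
    exact and_congr (by omega) Iff.rfl
  rw [← hM, ← ncard_setOf_ncard_eq, ← ncard_inter_add_ncard_sdiff_eq_ncard S {X | a ∈ X},
    hcompl, ncard_image_of_injective _ compl_injective, two_mul]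
  rfl

end Complementation

/-- On a domain with exactly `2n` elements (`n ≥ 1`), the complementation relation is an
equivalence relation with exactly `(2n).choose n / 2 + 1` classes. -/
theorem complementation_card_quotient {M : Type*} (n : ℕ) (hn : 1 ≤ n)
    (hM : Nat.card M = 2 * n) :
    ∃ hE : Equivalence (@Ecmp M),
      Nat.card (Quotient (Setoid.mk Ecmp hE)) = (Nat.choose (2 * n) n) / 2 + 1 := by
  have : Finite M := Nat.finite_of_card_ne_zero (by omega)
  obtain ⟨a⟩ : Nonempty M := (Nat.card_pos_iff.1 (by omega)).1
  refine ⟨ecmp_equivalence, ?_⟩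
  have hker : Setoid.mk Ecmp ecmp_equivalence = Setoid.ker (ecmpClass a) :=
    Setoid.ext fun _ _ => ecmp_iff_ecmpClass_eq a
  have hpairs := two_mul_ncard_setOf_ncard_eq_and_mem hM a
  simp_rw [← cmp_iff_ncard_eq hM] at hpairs
  rw [hker, Nat.card_congr (Setoid.quotientKerEquivRange _), natCard_range_ecmpClass]
  omega
end

section
/- Let M be a type and E an equivalence relation on Set M that is cardinality coarsening on small concepts. Then for every ∂ : Set M → M realizing A[E], E is cardinality coarsening on abstracts: for all X, Y : Set M with Cardinal.mk X = Cardinal.mk Y and X ⊆ Set.range ∂, E(X, Y) holds. (The key point is that Cardinal.mk (Set.range ∂) ≤ Cardinal.mk (Quotient sE).) -/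
universe u

open Cardinal

theorem Cardinal.mk_range_le_mk_quotient {α β : Type u} (s : Setoid α) {f : α → β}
    (hf : ∀ a b, s a b → f a = f b) : #(Set.range f) ≤ #(Quotient s) :=
  Set.range_quotient_lift (s := s) hf ▸ mk_range_le

/-- If `E` is cardinality coarsening on small concepts, then any realization of `A[E]` is
cardinality coarsening on abstracts. -/
theorem ccSmall_implies_ccAbstracts {M : Type u} (E : Set M → Set M → Prop)
    (hE : Equivalence E)
    (hsmall : ∀ X Y : Set M, Cardinal.mk X = Cardinal.mk Y →
      Cardinal.mk X ≤ Cardinal.mk (Quotient (Setoid.mk E hE)) → E X Y)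
    (d : Set M → M) (hd : ∀ X Y : Set M, d X = d Y ↔ E X Y)
    (X Y : Set M) (hXY : Cardinal.mk X = Cardinal.mk Y) (hX : X ⊆ Set.range d) :
    E X Y := by
  refine hsmall X Y hXY ?_
  calc #X ≤ #(Set.range d) := mk_le_mk_of_subset hX
    _ ≤ #(Quotient (Setoid.mk E hE)) :=
      mk_range_le_mk_quotient _ fun A B hAB => (hd A B).mpr hAB
end

section
/- Let M be an infinite type and let sE₀ be the setoid on Set M given by the bicardinality relation E₀(X,Y) := Cardinal.mk X = Cardinal.mk Y ∧ Cardinal.mk ↥(Xᶜ) = Cardinal.mk ↥(Yᶜ). Then Cardinal.mk (Quotient sE₀) ≤ Cardinal.mk M. -/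
/-!
A bicardinality class is determined by the pair `(#X, #Xᶜ)`, both entries of which are cardinals
`≤ #M`. Through `Cardinal.ord` the cardinals `≤ κ` embed into the ordinals `≤ κ.ord`, of which there
are `κ + 1`; hence there are at most `(#M + 1)² = #M` classes when `M` is infinite.
-/

universe u

def bicardSetoid (M : Type u) : Setoid (Set M) :=
  ⟨fun X Y => Cardinal.mk X = Cardinal.mk Y ∧ Cardinal.mk ↥(Xᶜ) = Cardinal.mk ↥(Yᶜ),
    ⟨fun _ => ⟨rfl, rfl⟩, fun h => ⟨h.1.symm, h.2.symm⟩,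
      fun h h' => ⟨h.1.trans h'.1, h.2.trans h'.2⟩⟩⟩

open Cardinal Set

namespace Cardinal

theorem mk_Iic_ordinal (o : Ordinal.{u}) : #(Iic o) = lift.{u + 1} (o.card + 1) := by
  rw [← Order.Iio_succ, mk_Iio_ordinal, Order.succ_eq_add_one, Ordinal.card_add_one]

theorem mk_Iic_le (κ : Cardinal.{u}) : #(Iic κ) ≤ lift.{u + 1} (κ + 1) :=
  calc #(Iic κ) = #(ord '' Iic κ) := (mk_image_eq ord_injective).symm
    _ ≤ #(Iic κ.ord) := mk_le_mk_of_subset <| image_subset_iff.2 fun _ h => ord_le_ord.2 h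
    _ = lift.{u + 1} (κ + 1) := by rw [mk_Iic_ordinal, card_ord]

end Cardinal

section Bicard

variable {M : Type u}

def bicard (X : Set M) : Cardinal.{u} × Cardinal.{u} := (#X, #↥Xᶜ)

variable (M) in
theorem bicardSetoid_eq_ker : bicardSetoid M = Setoid.ker (bicard (M := M)) := by
  ext X Y
  rw [Setoid.ker_def, bicard, bicard, Prod.ext_iff]
  rfl

theorem range_bicard_subset : range (bicard (M := M)) ⊆ Iic #M ×ˢ Iic #M :=
  range_subset_iff.2 fun X => ⟨mk_set_le X, mk_set_le Xᶜ⟩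

end Bicard

/-- On an infinite domain, the number of bicardinality classes is at most `|M|`. -/
theorem bicard_quotient_le {M : Type u} [Infinite M] :
    Cardinal.mk (Quotient (bicardSetoid M)) ≤ Cardinal.mk M := by
  have hM : ℵ₀ ≤ #M := infinite_iff.1 ‹_›
  rw [← lift_le.{u + 1}, bicardSetoid_eq_ker]
  calc lift.{u + 1} #(Quotient (Setoid.ker bicard)) = #(range (bicard (M := M))) :=
        (lift_mk_eq'.2 ⟨Setoid.quotientKerEquivRange _⟩).trans (lift_id'.{u, u + 1} _)
    _ ≤ #(Iic #M ×ˢ Iic #M) := mk_le_mk_of_subset range_bicard_subset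
    _ = #(Iic #M) * #(Iic #M) := mk_setProd _ _
    _ ≤ lift.{u + 1} (#M + 1) * lift.{u + 1} (#M + 1) := mul_le_mul' (mk_Iic_le _) (mk_Iic_le _)
    _ = lift.{u + 1} #M := by rw [← lift_mul, add_one_eq hM, mul_eq_self hM]
end
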